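/- Circumcircle equation: a point X = [x₁:x₂:x₃] in barycentric coordinates with respect to a spherical triangle Δ₀ lies on the circumcircle of Δ₀ whenever (1−cos a)x₂x₃ + (1−cos b)x₃x₁ + (1−cos c)x₁x₂ = 0; each vertex A = [1:0:0], B = [0:1:0], C = [0:0:1] satisfies this equation, and for any X on this conic the ∗-angular distances from X to the circumcenter O (suitably normalized) agree, so that it is the circumscribed conic with perspector [1−cos a : 1−cos b : 1−cos c]. -/
import Mathlib


noncomputable section

/-- The `∗`-inner product of barycentric coordinate triples, given the cosines
`ca, cb, cc` of the side lengths (the Gram-matrix inner product). -/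
def star3 (ca cb cc : ℝ) (p q : Fin 3 → ℝ) : ℝ :=
  p 0 * q 0 + p 1 * q 1 + p 2 * q 2 + (p 1 * q 2 + p 2 * q 1) * ca
    + (p 2 * q 0 + p 0 * q 2) * cb + (p 0 * q 1 + p 1 * q 0) * cc

/-- The circumconic with perspector `[1−cos a : 1−cos b : 1−cos c]`. -/
def circumConic (ca cb cc : ℝ) (x : Fin 3 → ℝ) : ℝ :=
  (1 - ca) * x 1 * x 2 + (1 - cb) * x 2 * x 0 + (1 - cc) * x 0 * x 1

/-- The conic `(1−cos a)x₂x₃ + (1−cos b)x₃x₁ + (1−cos c)x₁x₂ = 0` passes through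
the three vertices, and every point on it lies on the circle with center `O`
through `A`: it is the circumcircle, with perspector `[1−cos a : 1−cos b : 1−cos c]`. -/
theorem circumcircle_equation (a b c : ℝ)
    (ca cb cc : ℝ) (hca : ca = Real.cos a) (hcb : cb = Real.cos b)
    (hcc : cc = Real.cos c)
    (o : Fin 3 → ℝ)
    (ho : o = ![(1 - ca) * (1 + ca - cb - cc), (1 - cb) * (1 - ca + cb - cc),
                (1 - cc) * (1 - ca - cb + cc)]) :
    circumConic ca cb cc ![1, 0, 0] = 0 ∧
    circumConic ca cb cc ![0, 1, 0] = 0 ∧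
    circumConic ca cb cc ![0, 0, 1] = 0 ∧
    ∀ x : Fin 3 → ℝ, circumConic ca cb cc x = 0 →
      (star3 ca cb cc o x) ^ 2 * star3 ca cb cc ![1, 0, 0] ![1, 0, 0] =
        (star3 ca cb cc o ![1, 0, 0]) ^ 2 * star3 ca cb cc x x := by
  subst ho
  refine ⟨by simp [circumConic], by simp [circumConic], by simp [circumConic], ?_⟩
  intro x hx
  simp only [circumConic] at hx
  simp only [star3, circumConic, Matrix.cons_val_zero, Matrix.cons_val_one, Matrix.head_cons,
    Matrix.cons_val_two, Matrix.tail_cons]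
  linear_combination (2 - 4*cc^2 + 2*cc^4 - 4*cb^2 + 4*cb^2*cc^2 + 2*cb^4 + 8*ca*cb*cc - 8*ca*cb*cc^3 - 8*ca*cb^3*cc - 4*ca^2 + 4*ca^2*cc^2 + 4*ca^2*cb^2 + 8*ca^2*cb^2*cc^2 - 8*ca^3*cb*cc + 2*ca^4) * hx
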